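/- Let Γ be a w-potential game with potential P satisfying the regularity assumptions, let {s^k}_{k≥0} be a best-response sequence, let δ = min_{i∈[m]} α_i/w_i, and let P* be the maximum value of P over S. Then for every integer K ≥ 1, Σ_{k=1}^K ‖s^k − s^{k−1}‖² ≤ (2/δ)(P* − P(s^0)), where ‖·‖ is the Euclidean norm on the product space. -/

import Mathlib

open Finset Filter

/-- A best-response sequence: at stage `k+1`, players sequentially update,
player `i` best-responding to the already-updated strategies of players `j < i`
and the previous strategies of players `j > i`. -/
def IsBRSeq {m d : ℕ} (S : Fin m → Set (EuclideanSpace ℝ (Fin d)))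
    (Pay : Fin m → (Fin m → EuclideanSpace ℝ (Fin d)) → ℝ)
    (s : ℕ → Fin m → EuclideanSpace ℝ (Fin d)) : Prop :=
  (∀ i, s 0 i ∈ S i) ∧
  ∀ k : ℕ, ∀ i : Fin m,
    s (k + 1) i ∈ S i ∧
    ∀ x ∈ S i,
      Pay i (Function.update (fun j => if (j : ℕ) < (i : ℕ) then s (k + 1) j else s k j) i x) ≤
      Pay i (Function.update (fun j => if (j : ℕ) < (i : ℕ) then s (k + 1) j else s k j) i
        (s (k + 1) i))

open Topology

/-! Each single-player best response maximizes an `α i`-strongly concave function, so it beats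
the old strategy by at least `α i / 2 · ‖Δ‖²` in payoff, i.e. by `α i / (2 w i) · ‖Δ‖² ≥ δ/2 · ‖Δ‖²`
in potential. Summing over the players of a round and then over the rounds telescopes the
potential, whose total increase is bounded by `P* - P(s⁰)`. -/

theorem StrongConcaveOn.add_sq_le_of_isMaxOn {E : Type*} [NormedAddCommGroup E]
    [NormedSpace ℝ E] {s : Set E} {c : ℝ} {f : E → ℝ} (hf : StrongConcaveOn s c f)
    {x y : E} (hx : x ∈ s) (hy : y ∈ s) (hmax : IsMaxOn f s x) :
    f y + c / 2 * ‖y - x‖ ^ 2 ≤ f x := by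
  set D := c / 2 * ‖y - x‖ ^ 2 with hD
  have hsegment : ∀ a ∈ Set.Ioo (0 : ℝ) 1, f y + (1 - a) * D ≤ f x := by
    rintro a ⟨ha₀, ha₁⟩
    have hb : 0 ≤ 1 - a := sub_nonneg.2 ha₁.le
    have hconc := hf.2 hy hx ha₀.le hb (add_sub_cancel a 1)
    have hle := isMaxOn_iff.1 hmax _ (hf.1 hy hx ha₀.le hb (add_sub_cancel a 1))
    simp only [smul_eq_mul, ← hD] at hconc
    have : a * (f y + (1 - a) * D) ≤ a * f x := by linarith
    exact le_of_mul_le_mul_left this ha₀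
  have hlim : Tendsto (fun a : ℝ => f y + (1 - a) * D) (𝓝[>] 0) (𝓝 (f y + (1 - 0) * D)) :=
    (Continuous.tendsto (by fun_prop) 0).mono_left nhdsWithin_le_nhds
  rw [sub_zero, one_mul] at hlim
  exact le_of_tendsto hlim (eventually_of_mem (Ioo_mem_nhdsGT one_pos) hsegment)

section SwitchFirst

variable {m : ℕ} {α : Type*} (x y : Fin m → α)

def switchFirst (n : ℕ) : Fin m → α := fun j => if (j : ℕ) < n then y j else x j

theorem switchFirst_zero : switchFirst x y 0 = x := by
  funext j
  simp [switchFirst]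

theorem switchFirst_last : switchFirst x y m = y := by
  funext j
  simp [switchFirst, j.isLt]

theorem switchFirst_apply_self (i : Fin m) : switchFirst x y i i = x i := by
  simp [switchFirst]

theorem update_switchFirst_self (i : Fin m) :
    Function.update (switchFirst x y i) i (y i) = switchFirst x y (i + 1) := by
  funext j
  rcases eq_or_ne j i with rfl | hji
  · simp [switchFirst]
  · have : (j : ℕ) < i + 1 ↔ (j : ℕ) < i := by have := Fin.val_ne_of_ne hji; omega
    simp [switchFirst, hji, this]

theorem switchFirst_mem_pi {S : Fin m → Set α} (hx : ∀ j, x j ∈ S j) (hy : ∀ j, y j ∈ S j)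
    (n : ℕ) (j : Fin m) : switchFirst x y n j ∈ S j := by
  unfold switchFirst
  split_ifs
  exacts [hy j, hx j]

theorem sum_sub_switchFirst {β : Type*} [AddCommGroup β] (F : (Fin m → α) → β) :
    ∑ i : Fin m, (F (switchFirst x y (i + 1)) - F (switchFirst x y i)) = F y - F x := by
  rw [Fin.sum_univ_eq_sum_range (fun n => F (switchFirst x y (n + 1)) - F (switchFirst x y n)),
    sum_range_sub (fun n => F (switchFirst x y n)), switchFirst_zero, switchFirst_last]

end SwitchFirst

section PotentialGame

variable {ι E : Type*} [DecidableEq ι] [NormedAddCommGroup E] [NormedSpace ℝ E]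
  {S : ι → Set E} {Pay : ι → (ι → E) → ℝ}

def IsWeightedPotential (S : ι → Set E) (Pay : ι → (ι → E) → ℝ) (w : ι → ℝ)
    (P : (ι → E) → ℝ) : Prop :=
  ∀ (i : ι) (s : ι → E), (∀ j, s j ∈ S j) → ∀ x ∈ S i,
    Pay i s - Pay i (Function.update s i x) = w i * (P s - P (Function.update s i x))

theorem IsWeightedPotential.potential_gain_of_isMaxOn {w : ι → ℝ} {P : (ι → E) → ℝ}
    (hP : IsWeightedPotential S Pay w P) {i : ι} (hw : 0 < w i) {c : ℝ} {s : ι → E}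
    (hs : ∀ j, s j ∈ S j) {x : E} (hx : x ∈ S i)
    (hconc : StrongConcaveOn (S i) c fun z => Pay i (Function.update s i z))
    (hbest : IsMaxOn (fun z => Pay i (Function.update s i z)) (S i) x) :
    c / w i / 2 * ‖x - s i‖ ^ 2 ≤ P (Function.update s i x) - P s := by
  have hpay := hconc.add_sq_le_of_isMaxOn hx (hs i) hbest
  rw [Function.update_eq_self, norm_sub_rev] at hpay
  have hupdate : ∀ j, Function.update s i x j ∈ S j :=
    (Function.forall_update_iff s fun j z => z ∈ S j).2 ⟨hx, fun j _ => hs j⟩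
  have hpot := hP i _ hupdate (s i) (hs i)
  rw [Function.update_idem, Function.update_eq_self] at hpot
  calc c / w i / 2 * ‖x - s i‖ ^ 2 = (c / 2 * ‖x - s i‖ ^ 2) / w i := by ring
    _ ≤ (Pay i (Function.update s i x) - Pay i s) / w i := by gcongr; linarith
    _ = P (Function.update s i x) - P s := by rw [hpot]; field_simp

end PotentialGame

section BestResponse

variable {m d : ℕ} {S : Fin m → Set (EuclideanSpace ℝ (Fin d))}
  {Pay : Fin m → (Fin m → EuclideanSpace ℝ (Fin d)) → ℝ}
  {s : ℕ → Fin m → EuclideanSpace ℝ (Fin d)}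

theorem IsBRSeq.mem (hs : IsBRSeq S Pay s) : ∀ k i, s k i ∈ S i
  | 0 => hs.1
  | k + 1 => fun i => (hs.2 k i).1

variable {α w : Fin m → ℝ} {P : (Fin m → EuclideanSpace ℝ (Fin d)) → ℝ} {δ : ℝ}
  (hs : IsBRSeq S Pay s) (hP : IsWeightedPotential S Pay w P) (hw : ∀ i, 0 < w i)
  (hconc : ∀ (i : Fin m) (s : Fin m → EuclideanSpace ℝ (Fin d)), (∀ j, s j ∈ S j) →
    StrongConcaveOn (S i) (α i) (fun x => Pay i (Function.update s i x)))
  (hδ : ∀ i, δ ≤ α i / w i)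
include hs hP hw hconc hδ

theorem IsBRSeq.sq_le_potential_gain (k : ℕ) :
    δ / 2 * ∑ i, ‖s (k + 1) i - s k i‖ ^ 2 ≤ P (s (k + 1)) - P (s k) := by
  rw [mul_sum, ← sum_sub_switchFirst (s k) (s (k + 1)) P]
  refine sum_le_sum fun i _ => ?_
  have hprofile := switchFirst_mem_pi (s k) (s (k + 1)) (hs.mem k) (hs.mem (k + 1)) i
  have hgain := hP.potential_gain_of_isMaxOn (hw i) hprofile (hs.mem (k + 1) i)
    (hconc i _ hprofile) (hs.2 k i).2
  rw [update_switchFirst_self, switchFirst_apply_self] at hgain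
  calc δ / 2 * ‖s (k + 1) i - s k i‖ ^ 2 ≤ α i / w i / 2 * ‖s (k + 1) i - s k i‖ ^ 2 := by
        gcongr; exact hδ i
    _ ≤ _ := hgain

theorem IsBRSeq.sum_sq_le_potential_gain (K : ℕ) :
    δ / 2 * ∑ k ∈ range K, ∑ i, ‖s (k + 1) i - s k i‖ ^ 2 ≤ P (s K) - P (s 0) := by
  rw [mul_sum, ← sum_range_sub (fun k => P (s k))]
  exact sum_le_sum fun k _ => hs.sq_le_potential_gain hP hw hconc hδ k

end BestResponse

theorem potential_game_BR_sum_of_squares_general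
    (m d : ℕ)
    (S : Fin m → Set (EuclideanSpace ℝ (Fin d)))
    (Pay : Fin m → (Fin m → EuclideanSpace ℝ (Fin d)) → ℝ)
    (α : Fin m → ℝ) (hα : ∀ i, 0 < α i)
    (hconc : ∀ (i : Fin m) (s : Fin m → EuclideanSpace ℝ (Fin d)), (∀ j, s j ∈ S j) →
      StrongConcaveOn (S i) (α i) (fun x => Pay i (Function.update s i x)))
    (w : Fin m → ℝ) (hw : ∀ i, 0 < w i)
    (P : (Fin m → EuclideanSpace ℝ (Fin d)) → ℝ)
    (hpot : ∀ (i : Fin m) (s : Fin m → EuclideanSpace ℝ (Fin d)), (∀ j, s j ∈ S j) →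
      ∀ x ∈ S i,
      Pay i s - Pay i (Function.update s i x) = w i * (P s - P (Function.update s i x)))
    (δ : ℝ) (hδ : IsLeast (Set.range fun i => α i / w i) δ)
    (Pstar : ℝ) (hPstar : IsGreatest (P '' {s | ∀ j, s j ∈ S j}) Pstar)
    (s : ℕ → Fin m → EuclideanSpace ℝ (Fin d)) (hs : IsBRSeq S Pay s) :
    ∀ K : ℕ, 1 ≤ K →
      ∑ k ∈ Finset.range K, ∑ i, ‖s (k + 1) i - s k i‖ ^ 2 ≤
        2 / δ * (Pstar - P (s 0)) := by
  intro K _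
  have hδ_pos : 0 < δ := by
    obtain ⟨i, rfl⟩ := hδ.1
    exact div_pos (hα i) (hw i)
  have hgain := hs.sum_sq_le_potential_gain hpot hw hconc (fun i => hδ.2 ⟨i, rfl⟩) K
  have hPK : P (s K) ≤ Pstar := hPstar.2 ⟨s K, hs.mem K, rfl⟩
  rw [div_mul_eq_mul_div, le_div_iff₀ hδ_pos]
  linarith

/-- Sum-of-squares estimate for best-response sequences in a
`w`-potential game: `∑_{k=1}^K ‖s^k − s^{k−1}‖² ≤ (2/δ)(P* − P(s⁰))`. -/
theorem potential_game_BR_sum_of_squares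
    (m d : ℕ) (hm : 1 ≤ m)
    (S : Fin m → Set (EuclideanSpace ℝ (Fin d)))
    (hSne : ∀ i, (S i).Nonempty) (hScpt : ∀ i, IsCompact (S i))
    (hScvx : ∀ i, Convex ℝ (S i))
    (Pay : Fin m → (Fin m → EuclideanSpace ℝ (Fin d)) → ℝ)
    (α : Fin m → ℝ) (hα : ∀ i, 0 < α i)
    (hconc : ∀ (i : Fin m) (s : Fin m → EuclideanSpace ℝ (Fin d)), (∀ j, s j ∈ S j) →
      StrongConcaveOn (S i) (α i) (fun x => Pay i (Function.update s i x)))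
    (gradP : Fin m → (Fin m → EuclideanSpace ℝ (Fin d)) → EuclideanSpace ℝ (Fin d))
    (hgrad : ∀ (i : Fin m) (s : Fin m → EuclideanSpace ℝ (Fin d)), (∀ j, s j ∈ S j) →
      HasGradientAt (fun x => Pay i (Function.update s i x)) (gradP i s) (s i))
    (L : ℝ) (hL : 0 < L)
    (hLip : ∀ (i : Fin m) (s s' : Fin m → EuclideanSpace ℝ (Fin d)),
      (∀ j, s j ∈ S j) → (∀ j, s' j ∈ S j) →
      ‖gradP i s - gradP i s'‖ ≤ L * Real.sqrt (∑ j, ‖s j - s' j‖ ^ 2))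
    (w : Fin m → ℝ) (hw : ∀ i, 0 < w i)
    (P : (Fin m → EuclideanSpace ℝ (Fin d)) → ℝ)
    (hpot : ∀ (i : Fin m) (s : Fin m → EuclideanSpace ℝ (Fin d)), (∀ j, s j ∈ S j) →
      ∀ x ∈ S i,
      Pay i s - Pay i (Function.update s i x) = w i * (P s - P (Function.update s i x)))
    (δ : ℝ) (hδ : IsLeast (Set.range fun i => α i / w i) δ)
    (Pstar : ℝ) (hPstar : IsGreatest (P '' {s | ∀ j, s j ∈ S j}) Pstar)
    (s : ℕ → Fin m → EuclideanSpace ℝ (Fin d)) (hs : IsBRSeq S Pay s) :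
    ∀ K : ℕ, 1 ≤ K →
      ∑ k ∈ Finset.range K, ∑ i, ‖s (k + 1) i - s k i‖ ^ 2 ≤
        2 / δ * (Pstar - P (s 0)) :=
  potential_game_BR_sum_of_squares_general m d S Pay α hα hconc w hw P hpot δ hδ Pstar hPstar s hs
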